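/- Let G_τ(A,C) = Σ_{y=1}^h f_y ‖m_y − Σ A C_y‖² + τ ‖A‖_F² with τ > 0 and Σ symmetric positive semidefinite with rank(Σ) ≥ d ≥ 1. If some Σ m_{y₀} ≠ 0, then the infimum of G_τ over ℝ^{p×d} × (ℝ^d)^h is strictly less than Σ_{y=1}^h f_y ‖m_y‖², yet every stationary point (A,C) of G_τ satisfies G_τ(A,C) = Σ_{y=1}^h f_y ‖m_y‖²; hence the infimum of G_τ is not attained at any stationary point, and therefore not attained at all. -/

import Mathlib

/-!
The data term of `G_τ` depends on `(A, C)` only through the products `A C_y`, so moving a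
scalar factor `c` from `C` to `A` changes `G_τ` only through the ridge term, by
`τ (c² - 1) ‖A‖²`. Differentiating at `c = 1`, the derivatives of `G_τ` in the directions `A` and
`C` differ by `2 τ ‖A‖²`. At a stationary point both vanish (the coordinate partials determine the
full derivative), so `A = 0` and `G_τ = Σ_y f_y ‖m_y‖²`. On the other hand, along
`t ↦ (t A₀, C₀)` with `A₀ C₀_y = [y = y₀] m_{y₀}` the criterion decreases at rate
`2 f_{y₀} ⟨m_{y₀}, Σ m_{y₀}⟩ > 0` near `t = 0`, so the infimum is smaller and, since minimizers
are stationary, not attained.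
-/

open Matrix

/-- The ridge SIR criterion
`G_τ(A,C) = Σ_y f_y ‖m_y − Σ A C_y‖² + τ ‖A‖_F²`. -/
noncomputable def Gt {p d h : ℕ} (f : Fin h → ℝ) (m : Fin h → Fin p → ℝ)
    (S : Matrix (Fin p) (Fin p) ℝ) (τ : ℝ)
    (A : Matrix (Fin p) (Fin d) ℝ) (C : Fin h → Fin d → ℝ) : ℝ :=
  (∑ y, f y * ∑ i, (m y i - S.mulVec (A.mulVec (C y)) i) ^ 2)
    + τ * ∑ i, ∑ j, (A i j) ^ 2

-- Any norm inducing the product topology will do; only differentiability is at stake.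
attribute [local instance] Matrix.normedAddCommGroup Matrix.normedSpace

theorem DifferentiableAt.hasLineDerivAt_zero_of_basis {E ι : Type*} [NormedAddCommGroup E]
    [NormedSpace ℝ E] {g : E → ℝ} {x : E} (hg : DifferentiableAt ℝ g x) (b : Module.Basis ι ℝ E)
    (h : ∀ i, lineDeriv ℝ g x (b i) = 0) (v : E) : HasLineDerivAt ℝ g 0 x v := by
  have hzero : fderiv ℝ g x = 0 :=
    ContinuousLinearMap.coe_injective <| b.ext fun i => by
      simpa [← hg.lineDeriv_eq_fderiv] using h i
  simpa [hzero] using hg.hasFDerivAt.hasLineDerivAt v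

theorem Function.update_add_smul_eq_add_smul_single {ι R M : Type*} [DecidableEq ι] [Semiring R]
    [AddCommMonoid M] [Module R M] (C : ι → M) (y : ι) (t : R) (w : M) :
    Function.update C y (C y + t • w) = C + t • (Pi.single y w : ι → M) := by
  ext y'
  rcases eq_or_ne y' y with rfl | hy <;> simp [*]

theorem exists_sub_two_mul_add_sq_mul_lt (a : ℝ) {B : ℝ} (hB : 0 < B) (D : ℝ) :
    ∃ t : ℝ, a - 2 * t * B + t ^ 2 * D < a := by
  refine ⟨B / (|D| + 1), ?_⟩
  have hpos : 0 < |D| + 1 := by positivity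
  have hD : D ≤ |D| := le_abs_self D
  field_simp
  nlinarith [abs_nonneg D, mul_pos hB hB]

theorem Matrix.eq_zero_of_sum_sum_sq_eq_zero {m n : Type*} [Fintype m] [Fintype n]
    {A : Matrix m n ℝ} (hA : ∑ i, ∑ j, A i j ^ 2 = 0) : A = 0 := by
  ext i j
  have hrow := (Fintype.sum_eq_zero_iff_of_nonneg fun i =>
    Finset.sum_nonneg fun j _ => sq_nonneg (A i j)).1 hA
  have hentry := (Fintype.sum_eq_zero_iff_of_nonneg fun j => sq_nonneg (A i j)).1
    (congr_fun hrow i)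
  simpa using congr_fun hentry j

section Ridge

variable {p d h : ℕ} (f : Fin h → ℝ) (m : Fin h → Fin p → ℝ) (S : Matrix (Fin p) (Fin p) ℝ)
  (τ : ℝ)

theorem differentiable_Gt_left (C : Fin h → Fin d → ℝ) :
    Differentiable ℝ (fun A : Matrix (Fin p) (Fin d) ℝ => Gt f m S τ A C) := by
  change Differentiable ℝ (fun A : Fin p → Fin d → ℝ => Gt f m S τ (Matrix.of A) C)
  simp only [Gt, mulVec, dotProduct, of_apply]
  fun_prop

theorem differentiable_Gt_right (A : Matrix (Fin p) (Fin d) ℝ) :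
    Differentiable ℝ (Gt f m S τ A) := by
  unfold Gt
  simp only [mulVec, dotProduct]
  fun_prop

theorem Gt_smul_left (c : ℝ) (A : Matrix (Fin p) (Fin d) ℝ) (C : Fin h → Fin d → ℝ) :
    Gt f m S τ (c • A) C = Gt f m S τ A (c • C) + τ * (c ^ 2 - 1) * ∑ i, ∑ j, A i j ^ 2 := by
  simp only [Gt, smul_mulVec, Pi.smul_apply, mulVec_smul, Matrix.smul_apply, smul_eq_mul, mul_pow,
    ← Finset.mul_sum]
  ring

theorem Gt_smul_left_eq_quadratic (t : ℝ) (A : Matrix (Fin p) (Fin d) ℝ)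
    (C : Fin h → Fin d → ℝ) :
    Gt f m S τ (t • A) C = ∑ y, f y * ∑ i, m y i ^ 2
      - 2 * t * ∑ y, f y * (m y ⬝ᵥ S *ᵥ A *ᵥ C y)
      + t ^ 2 * (∑ y, f y * ∑ i, (S *ᵥ A *ᵥ C y) i ^ 2 + τ * ∑ i, ∑ j, A i j ^ 2) := by
  have hexpand : ∀ a b : Fin p → ℝ,
      ∑ i, (a i - t * b i) ^ 2 = ∑ i, a i ^ 2 - 2 * t * (a ⬝ᵥ b) + t ^ 2 * ∑ i, b i ^ 2 := by
    intro a b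
    simp only [dotProduct, Finset.mul_sum, ← Finset.sum_sub_distrib, ← Finset.sum_add_distrib]
    exact Finset.sum_congr rfl fun i _ => by ring
  simp only [Gt, smul_mulVec, mulVec_smul, Pi.smul_apply, smul_eq_mul, Matrix.smul_apply, hexpand,
    mul_pow, ← Finset.mul_sum, mul_add, mul_sub, Finset.sum_add_distrib, Finset.sum_sub_distrib]
  simp only [mul_left_comm (f _), ← Finset.mul_sum]
  ring

theorem hasDerivAt_Gt_add_smul_self {A : Matrix (Fin p) (Fin d) ℝ} {C : Fin h → Fin d → ℝ}
    {c : ℝ} (hC : HasDerivAt (fun t : ℝ => Gt f m S τ A (C + t • C)) c 0) :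
    HasDerivAt (fun t : ℝ => Gt f m S τ (A + t • A) C)
      (c + 2 * τ * ∑ i, ∑ j, A i j ^ 2) 0 := by
  set N := ∑ i, ∑ j, A i j ^ 2
  have hridge : HasDerivAt (fun t : ℝ => τ * ((1 + t) ^ 2 - 1) * N) (2 * τ * N) 0 := by
    refine (((((hasDerivAt_id' (0 : ℝ)).const_add 1).fun_pow 2).sub_const 1).const_mul τ
      |>.mul_const N).congr_deriv ?_
    push_cast
    ring
  have hfun : (fun t : ℝ => Gt f m S τ (A + t • A) C)
      = fun t => Gt f m S τ A (C + t • C) + τ * ((1 + t) ^ 2 - 1) * N := by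
    funext t
    rw [show A + t • A = (1 + t) • A by module, show C + t • C = (1 + t) • C by module,
      Gt_smul_left]
  rw [hfun]
  exact hC.fun_add hridge

theorem Gt_eq_of_lineDeriv_eq_zero (hτ : 0 < τ) {A : Matrix (Fin p) (Fin d) ℝ}
    {C : Fin h → Fin d → ℝ}
    (hA : ∀ i k, lineDeriv ℝ (fun A => Gt f m S τ A C) A (single i k 1) = 0)
    (hC : ∀ y j, lineDeriv ℝ (Gt f m S τ A) C (Pi.single y (Pi.single j 1)) = 0) :
    Gt f m S τ A C = ∑ y, f y * ∑ i, m y i ^ 2 := by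
  have hA' : HasDerivAt (fun t : ℝ => Gt f m S τ (A + t • A) C) 0 0 :=
    (differentiable_Gt_left f m S τ C A).hasLineDerivAt_zero_of_basis (stdBasis ℝ _ _)
      (fun ik => (stdBasis_eq_single ℝ ik.1 ik.2).symm ▸ hA ik.1 ik.2) A
  have hC' : HasDerivAt (fun t : ℝ => Gt f m S τ A (C + t • C)) 0 0 :=
    (differentiable_Gt_right f m S τ A C).hasLineDerivAt_zero_of_basis
      (Pi.basis fun _ => Pi.basisFun ℝ (Fin d)) (fun yj => by simpa using hC yj.1 yj.2) C
  have hN : ∑ i, ∑ j, A i j ^ 2 = 0 := by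
    have := hA'.unique (hasDerivAt_Gt_add_smul_self f m S τ hC')
    exact (mul_eq_zero.1 (zero_add (2 * τ * _) ▸ this).symm).resolve_left (by positivity)
  simp [Gt, Matrix.eq_zero_of_sum_sum_sq_eq_zero hN]

theorem exists_Gt_lt_of_pos {A : Matrix (Fin p) (Fin d) ℝ} {C : Fin h → Fin d → ℝ}
    (hpos : 0 < ∑ y, f y * (m y ⬝ᵥ S *ᵥ A *ᵥ C y)) :
    ∃ t : ℝ, Gt f m S τ (t • A) C < ∑ y, f y * ∑ i, m y i ^ 2 := by
  simpa only [Gt_smul_left_eq_quadratic] using exists_sub_two_mul_add_sq_mul_lt _ hpos _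

theorem exists_Gt_lt_of_mulVec_ne_zero (hd : 1 ≤ d) {y₀ : Fin h} (hf : 0 < f y₀)
    (hS : S.PosSemidef) (hm : S *ᵥ m y₀ ≠ 0) :
    ∃ (A : Matrix (Fin p) (Fin d) ℝ) (C : Fin h → Fin d → ℝ),
      Gt f m S τ A C < ∑ y, f y * ∑ i, m y i ^ 2 := by
  have hquad : 0 < m y₀ ⬝ᵥ S *ᵥ m y₀ := by
    have hnonneg := hS.dotProduct_mulVec_nonneg (m y₀)
    have hne := (hS.dotProduct_mulVec_zero_iff (m y₀)).not.2 hm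
    simp only [star_trivial] at hnonneg hne
    exact hnonneg.lt_of_ne' hne
  let e : Fin d → ℝ := Pi.single ⟨0, hd⟩ 1
  let A₀ : Matrix (Fin p) (Fin d) ℝ := of fun i _ => m y₀ i
  let C₀ : Fin h → Fin d → ℝ := Pi.single y₀ e
  have hA₀e : A₀ *ᵥ e = m y₀ := by
    ext i
    simp [A₀, e, mulVec, dotProduct, Pi.single_apply]
  have hpos : 0 < ∑ y, f y * (m y ⬝ᵥ S *ᵥ A₀ *ᵥ C₀ y) := by
    rw [Fintype.sum_eq_single y₀ fun y hy => by simp [C₀, hy]]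
    simpa [C₀, hA₀e] using mul_pos hf hquad
  obtain ⟨t, ht⟩ := exists_Gt_lt_of_pos f m S τ hpos
  exact ⟨_, _, ht⟩

end Ridge

theorem inf_not_attained_general {p d h : ℕ} (hd : 1 ≤ d) (f : Fin h → ℝ) (hf : ∀ y, 0 < f y)
    (m : Fin h → Fin p → ℝ) (S : Matrix (Fin p) (Fin p) ℝ)
    (hS : S.PosSemidef)
    (τ : ℝ) (hτ : 0 < τ)
    (y₀ : Fin h) (hm : S.mulVec (m y₀) ≠ 0) :
    (∃ (A : Matrix (Fin p) (Fin d) ℝ) (C : Fin h → Fin d → ℝ),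
        Gt f m S τ A C < ∑ y, f y * ∑ i, (m y i) ^ 2)
      ∧ (∀ (A : Matrix (Fin p) (Fin d) ℝ) (C : Fin h → Fin d → ℝ),
          (∀ (i : Fin p) (k : Fin d),
            deriv (fun t : ℝ =>
              Gt f m S τ (A + t • Matrix.single i k (1 : ℝ)) C) 0 = 0) →
          (∀ (y : Fin h) (j : Fin d),
            deriv (fun t : ℝ =>
              Gt f m S τ A (Function.update C y (C y + t • (Pi.single j 1 : Fin d → ℝ)))) 0 = 0) →
          Gt f m S τ A C = ∑ y, f y * ∑ i, (m y i) ^ 2)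
      ∧ ¬ ∃ (A : Matrix (Fin p) (Fin d) ℝ) (C : Fin h → Fin d → ℝ),
          ∀ (A' : Matrix (Fin p) (Fin d) ℝ) (C' : Fin h → Fin d → ℝ),
            Gt f m S τ A C ≤ Gt f m S τ A' C' := by
  have hlt := exists_Gt_lt_of_mulVec_ne_zero f m S τ hd (hf y₀) hS hm
  refine ⟨hlt, fun A C hA hC => ?_, ?_⟩
  · refine Gt_eq_of_lineDeriv_eq_zero f m S τ hτ hA fun y j => ?_
    have hCy := hC y j
    simp only [Function.update_add_smul_eq_add_smul_single] at hCy
    exact hCy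
  · rintro ⟨A, C, hmin⟩
    have hstat := Gt_eq_of_lineDeriv_eq_zero f m S τ hτ
      (fun i k => congr_fun (IsLocalMin.lineDeriv_eq_zero
        (Filter.Eventually.of_forall fun A' => hmin A' C)) _)
      (fun y j => congr_fun (IsLocalMin.lineDeriv_eq_zero
        (Filter.Eventually.of_forall fun C' => hmin A C')) _)
    obtain ⟨A₁, C₁, hA₁⟩ := hlt
    exact (hmin A₁ C₁).not_gt (hstat ▸ hA₁)

/-- If `τ > 0`, `Σ` is symmetric positive semidefinite with `rank(Σ) ≥ d ≥ 1`, and some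
`Σ m_{y₀} ≠ 0`, then the infimum of `G_τ` is strictly less than `Σ_y f_y ‖m_y‖²`, every
stationary point of `G_τ` has value `Σ_y f_y ‖m_y‖²`, and the infimum is not attained. -/
theorem inf_not_attained {p d h : ℕ} (hd : 1 ≤ d) (f : Fin h → ℝ) (hf : ∀ y, 0 < f y)
    (m : Fin h → Fin p → ℝ) (S : Matrix (Fin p) (Fin p) ℝ)
    (hS : S.PosSemidef) (hrank : d ≤ S.rank)
    (τ : ℝ) (hτ : 0 < τ)
    (y₀ : Fin h) (hm : S.mulVec (m y₀) ≠ 0) :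
    (∃ (A : Matrix (Fin p) (Fin d) ℝ) (C : Fin h → Fin d → ℝ),
        Gt f m S τ A C < ∑ y, f y * ∑ i, (m y i) ^ 2)
      ∧ (∀ (A : Matrix (Fin p) (Fin d) ℝ) (C : Fin h → Fin d → ℝ),
          (∀ (i : Fin p) (k : Fin d),
            deriv (fun t : ℝ =>
              Gt f m S τ (A + t • Matrix.single i k (1 : ℝ)) C) 0 = 0) →
          (∀ (y : Fin h) (j : Fin d),
            deriv (fun t : ℝ =>
              Gt f m S τ A (Function.update C y (C y + t • (Pi.single j 1 : Fin d → ℝ)))) 0 = 0) →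
          Gt f m S τ A C = ∑ y, f y * ∑ i, (m y i) ^ 2)
      ∧ ¬ ∃ (A : Matrix (Fin p) (Fin d) ℝ) (C : Fin h → Fin d → ℝ),
          ∀ (A' : Matrix (Fin p) (Fin d) ℝ) (C' : Fin h → Fin d → ℝ),
            Gt f m S τ A C ≤ Gt f m S τ A' C' :=
  inf_not_attained_general hd f hf m S hS τ hτ y₀ hm
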